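/- Let β > 1. Then for every irrational x ∈ [0,1) and every n ≥ 1, log q_{k_n(x)+3}(x) − (log β/2)·n ≥ −(log 6)/2. -/

import Mathlib

open MeasureTheory Filter Set

/-- The β-transformation `T_β x = βx - ⌊βx⌋` on `[0,1)`. -/
noncomputable def betaT (β : ℝ) (x : ℝ) : ℝ := β * x - ⌊β * x⌋

/-- The `i`-th digit (for `i ≥ 1`) of the β-expansion of `x`. -/
noncomputable def betaEps (β : ℝ) (i : ℕ) (x : ℝ) : ℤ := ⌊β * (betaT β)^[i - 1] x⌋

/-- The cylinder of order `n` of the β-expansion containing `x`. -/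
def betaCyl (β : ℝ) (n : ℕ) (x : ℝ) : Set ℝ :=
  {y ∈ Set.Ico (0:ℝ) 1 | ∀ i, 1 ≤ i → i ≤ n → betaEps β i y = betaEps β i x}

/-- The Gauss map, with `T 0 = 0`. -/
noncomputable def gaussMap (x : ℝ) : ℝ := if x = 0 then 0 else 1 / x - ⌊1 / x⌋

/-- The `i`-th partial quotient (for `i ≥ 1`) of the continued fraction expansion of `x`. -/
noncomputable def cfA (i : ℕ) (x : ℝ) : ℤ := ⌊1 / (gaussMap^[i - 1] x)⌋

/-- The cylinder of order `m` of the continued fraction expansion containing `x`. -/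
def cfCyl (m : ℕ) (x : ℝ) : Set ℝ :=
  {y ∈ Set.Ico (0:ℝ) 1 | ∀ i, 1 ≤ i → i ≤ m → cfA i y = cfA i x}

/-- `k_n(x)`: the exact number of partial quotients of the continued fraction of `x`
determined by the first `n` β-expansion digits of `x`. -/
noncomputable def kCF (β : ℝ) (n : ℕ) (x : ℝ) : ℕ :=
  sSup {m | betaCyl β n x ⊆ cfCyl m x}

/-- Denominators `q_n(x)` of the continued fraction convergents of `x`
(`q_0 = 1`, `q_1 = a_1`, `q_n = a_n q_{n-1} + q_{n-2}`). -/
noncomputable def cfQ (x : ℝ) : ℕ → ℤ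
  | 0 => 1
  | 1 => cfA 1 x
  | (n + 2) => cfA (n + 2) x * cfQ x (n + 1) + cfQ x n

/-- Numerators `p_n(x)` of the continued fraction convergents of `x`
(`p_0 = 0`, `p_1 = 1`, `p_n = a_n p_{n-1} + p_{n-2}`). -/
noncomputable def cfP (x : ℝ) : ℕ → ℤ
  | 0 => 0
  | 1 => 1
  | (n + 2) => cfA (n + 2) x * cfP x (n + 1) + cfP x n

/-- `l_n(x)`: the length of the longest string of zeros just after the `n`-th digit
of the β-expansion of `x`. -/
noncomputable def lZero (β : ℝ) (n : ℕ) (x : ℝ) : ℕ :=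
  sSup {k | ∀ j, 1 ≤ j → j ≤ k → betaEps β (n + j) x = 0}

/-!
Every `y` in the β-cylinder `J_n(x)` satisfies `|y - x| < β⁻ⁿ`, since `T_β^n` is affine of
slope `βⁿ` on `J_n(x)` and maps it into `[0,1)`. With `k = k_n(x)`, some such `y` lies outside
the continued-fraction cylinder `I_{k+1}(x)`. That cylinder contains the open interval between
the images of `0` and `1` under `s ↦ [0; a₁, …, a_{k+1} + s]`, and
`x = [0; a₁, …, a_{k+1} + T^{k+1} x]` lies in this interval at distance more than
`1 / (2 q_{k+3}²)` from both ends. Hence `βⁿ < 2 q_{k+3}²`.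

`k_n(x)` is finite because `J_n(x)` contains a right neighbourhood of `x`, while `I_m(x)` has
diameter less than `1 / q_m²`.
-/

open Topology Function

lemma gaussMap_of_ne_zero {z : ℝ} (hz : z ≠ 0) : gaussMap z = Int.fract (1 / z) := by
  rw [gaussMap, if_neg hz, Int.fract]

lemma gaussMap_mem_Ico (z : ℝ) : gaussMap z ∈ Ico 0 1 := by
  by_cases hz : z = 0
  · simp [gaussMap, hz]
  · rw [gaussMap_of_ne_zero hz]
    exact ⟨Int.fract_nonneg _, Int.fract_lt_one _⟩

lemma irrational_gaussMap {z : ℝ} (h : Irrational z) : Irrational (gaussMap z) := by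
  rw [gaussMap_of_ne_zero h.ne_zero, one_div, Int.fract]
  exact h.inv.sub_intCast _

lemma irrational_iterate_gaussMap {z : ℝ} (h : Irrational z) (i : ℕ) :
    Irrational (gaussMap^[i] z) := by
  induction i with
  | zero => exact h
  | succ i ih => rw [iterate_succ_apply']; exact irrational_gaussMap ih

lemma iterate_gaussMap_mem_Ioo {z : ℝ} (hz : z ∈ Ioo 0 1) (h : Irrational z) (i : ℕ) :
    gaussMap^[i] z ∈ Ioo 0 1 := by
  cases i with
  | zero => exact hz
  | succ i =>
    rw [iterate_succ_apply']
    have hT := irrational_gaussMap (irrational_iterate_gaussMap h i)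
    exact ⟨(gaussMap_mem_Ico _).1.lt_of_ne' hT.ne_zero, (gaussMap_mem_Ico _).2⟩

lemma mul_floor_add_gaussMap {w : ℝ} (hw : w ≠ 0) : w * (⌊1 / w⌋ + gaussMap w) = 1 := by
  rw [gaussMap_of_ne_zero hw, Int.fract, add_sub_cancel, mul_one_div_cancel hw]

lemma one_div_intCast_add_mem_Ioo {a : ℤ} {s : ℝ} (ha : 1 ≤ a) (hs : 0 < s) :
    1 / ((a : ℝ) + s) ∈ Ioo 0 1 := by
  have ha' : (1 : ℝ) ≤ a := by exact_mod_cast ha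
  exact ⟨by positivity, (div_lt_one (by positivity)).2 (by linarith)⟩

lemma floor_and_gaussMap_one_div_intCast_add {a : ℤ} {s : ℝ} (ha : 1 ≤ a)
    (hs : s ∈ Ico 0 1) :
    ⌊1 / (1 / ((a : ℝ) + s))⌋ = a ∧ gaussMap (1 / ((a : ℝ) + s)) = s := by
  have ha' : (1 : ℝ) ≤ a := by exact_mod_cast ha
  have hne : 1 / ((a : ℝ) + s) ≠ 0 := one_div_ne_zero (by linarith [hs.1])
  rw [gaussMap_of_ne_zero hne, one_div_one_div, Int.floor_intCast_add, Int.fract_intCast_add,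
    Int.floor_eq_zero_iff.2 hs, Int.fract_eq_self.2 hs, add_zero]
  exact ⟨rfl, rfl⟩

@[simp] lemma cfA_succ (i : ℕ) (z : ℝ) : cfA (i + 1) z = ⌊1 / gaussMap^[i] z⌋ := rfl

lemma iterate_gaussMap_ne_zero {w : ℝ} {i : ℕ} (h : 1 ≤ cfA (i + 1) w) :
    gaussMap^[i] w ≠ 0 := by
  intro h0
  simp [h0] at h

lemma iterate_gaussMap_mul_cfA_add {z : ℝ} {t : ℕ} (h : gaussMap^[t + 1] z ≠ 0) :
    gaussMap^[t + 1] z * (cfA (t + 2) z + gaussMap^[t + 2] z) = 1 := by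
  rw [cfA_succ, iterate_succ_apply' gaussMap (t + 1)]
  exact mul_floor_add_gaussMap h

lemma one_le_cfA {z : ℝ} (hz : z ∈ Ioo 0 1) (h : Irrational z) (i : ℕ) : 1 ≤ cfA i z := by
  obtain ⟨h0, h1⟩ := iterate_gaussMap_mem_Ioo hz h (i - 1)
  rw [cfA, Int.le_floor, Int.cast_one]
  exact (le_div_iff₀ h0).2 (by linarith)

lemma cfCyl_anti {m m' : ℕ} (h : m ≤ m') (z : ℝ) : cfCyl m' z ⊆ cfCyl m z :=
  fun _ hw ↦ ⟨hw.1, fun i h1 h2 ↦ hw.2 i h1 (h2.trans h)⟩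

lemma cfQ_add_two (z : ℝ) (m : ℕ) :
    cfQ z (m + 2) = cfA (m + 2) z * cfQ z (m + 1) + cfQ z m := rfl

lemma cfP_add_two (z : ℝ) (m : ℕ) :
    cfP z (m + 2) = cfA (m + 2) z * cfP z (m + 1) + cfP z m := rfl

lemma cfP_mul_cfQ_sub_cfQ_mul_cfP (z : ℝ) (t : ℕ) :
    cfP z (t + 1) * cfQ z t - cfQ z (t + 1) * cfP z t = (-1) ^ t := by
  induction t with
  | zero => simp [cfP, cfQ]
  | succ t ih =>
    rw [cfP, cfQ]
    linear_combination (-1 : ℤ) * ih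

lemma cfQ_add_mul_iterate_gaussMap {z : ℝ} {t : ℕ} (h : gaussMap^[t + 1] z ≠ 0) :
    (cfQ z (t + 1) + cfQ z t * gaussMap^[t + 1] z : ℝ) =
      gaussMap^[t + 1] z * (cfQ z (t + 2) + cfQ z (t + 1) * gaussMap^[t + 2] z) := by
  rw [cfQ_add_two]
  push_cast
  linear_combination -(cfQ z (t + 1) : ℝ) * iterate_gaussMap_mul_cfA_add h

/-- `cfMobius z t s = [0; a₁(z), …, a_{t+1}(z) + s]`. -/
noncomputable def cfMobius (z : ℝ) (t : ℕ) (s : ℝ) : ℝ :=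
  (cfP z (t + 1) + cfP z t * s) / (cfQ z (t + 1) + cfQ z t * s)

lemma cfMobius_zero (z s : ℝ) : cfMobius z 0 s = 1 / (cfA 1 z + s) := by
  simp [cfMobius, cfP, cfQ]

lemma cfMobius_succ (z : ℝ) (t : ℕ) {s : ℝ} (hs : (cfA (t + 2) z : ℝ) + s ≠ 0) :
    cfMobius z (t + 1) s = cfMobius z t (1 / (cfA (t + 2) z + s)) := by
  have hP : (cfP z (t + 1) + cfP z t * (1 / (cfA (t + 2) z + s)) : ℝ) * (cfA (t + 2) z + s) =
      cfP z (t + 2) + cfP z (t + 1) * s := by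
    rw [cfP_add_two]; push_cast; field_simp; ring
  have hQ : (cfQ z (t + 1) + cfQ z t * (1 / (cfA (t + 2) z + s)) : ℝ) * (cfA (t + 2) z + s) =
      cfQ z (t + 2) + cfQ z (t + 1) * s := by
    rw [cfQ_add_two]; push_cast; field_simp; ring
  rw [cfMobius, cfMobius, ← mul_div_mul_right ((cfP z (t + 1) : ℝ) + _) _ hs, hP, hQ]

section Continuants

variable {z : ℝ} (ha : ∀ i, 1 ≤ cfA i z)
include ha

lemma one_le_cfQ (m : ℕ) : 1 ≤ cfQ z m := by
  induction m using Nat.twoStepInduction with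
  | zero => simp [cfQ]
  | one => exact ha 1
  | more m ih₁ ih₂ =>
    rw [cfQ]
    nlinarith [ha (m + 2)]

lemma cfQ_add_le_cfQ (m : ℕ) : cfQ z (m + 1) + cfQ z m ≤ cfQ z (m + 2) := by
  rw [cfQ_add_two]
  nlinarith [ha (m + 2), one_le_cfQ ha (m + 1)]

lemma natCast_le_cfQ (m : ℕ) : (m : ℤ) ≤ cfQ z m := by
  induction m using Nat.twoStepInduction with
  | zero => simp [cfQ]
  | one => exact ha 1
  | more m _ ih₂ =>
    have := cfQ_add_le_cfQ ha m
    have := one_le_cfQ ha m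
    push_cast at ih₂ ⊢
    linarith

lemma cfQ_add_mul_pos {s : ℝ} (hs : 0 ≤ s) (t : ℕ) :
    0 < (cfQ z (t + 1) : ℝ) + cfQ z t * s := by
  have h₁ : (1 : ℝ) ≤ cfQ z (t + 1) := by exact_mod_cast one_le_cfQ ha (t + 1)
  have h₀ : (1 : ℝ) ≤ cfQ z t := by exact_mod_cast one_le_cfQ ha t
  positivity

lemma cfMobius_sub_cfMobius (t : ℕ) {s s' : ℝ}
    (hs : 0 ≤ s) (hs' : 0 ≤ s') :
    cfMobius z t s - cfMobius z t s' = (-1) ^ t * (s' - s) /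
      ((cfQ z (t + 1) + cfQ z t * s) * (cfQ z (t + 1) + cfQ z t * s')) := by
  have hdet : (cfP z (t + 1) * cfQ z t - cfQ z (t + 1) * cfP z t : ℝ) = (-1) ^ t := by
    exact_mod_cast cfP_mul_cfQ_sub_cfQ_mul_cfP z t
  rw [cfMobius, cfMobius,
    div_sub_div _ _ (cfQ_add_mul_pos ha hs t).ne' (cfQ_add_mul_pos ha hs' t).ne']
  congr 1
  linear_combination (s' - s) * hdet

lemma eq_cfMobius_of_mem_cfCyl (t : ℕ) {w : ℝ} (hw : w ∈ cfCyl (t + 1) z) :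
    w = cfMobius z t (gaussMap^[t + 1] w) := by
  induction t with
  | zero =>
    have h₁ : cfA 1 w = cfA 1 z := hw.2 1 le_rfl le_rfl
    have hw₀ : w ≠ 0 := iterate_gaussMap_ne_zero (i := 0) (h₁ ▸ ha 1)
    rw [cfMobius_zero, ← h₁, iterate_one]
    exact eq_one_div_of_mul_eq_one_left (mul_floor_add_gaussMap hw₀)
  | succ t ih =>
    have hdigit : cfA (t + 2) w = cfA (t + 2) z := hw.2 (t + 2) (by omega) le_rfl
    have hu : gaussMap^[t + 1] w ≠ 0 := iterate_gaussMap_ne_zero (hdigit ▸ ha (t + 2))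
    have hpos : (0 : ℝ) < cfA (t + 2) z + gaussMap^[t + 2] w := by
      have : (1 : ℝ) ≤ cfA (t + 2) z := by exact_mod_cast ha (t + 2)
      linarith [(gaussMap_mem_Ico (gaussMap^[t + 1] w)).1, iterate_succ_apply' gaussMap (t + 1) w]
    rw [cfMobius_succ z t hpos.ne', ← hdigit]
    convert ih (cfCyl_anti (by omega) z hw) using 2
    rw [iterate_succ_apply' gaussMap (t + 1)]
    exact (eq_one_div_of_mul_eq_one_left (mul_floor_add_gaussMap hu)).symm

lemma cfMobius_mem_cfCyl (t : ℕ) {s : ℝ} (hs : s ∈ Ioo 0 1) :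
    cfMobius z t s ∈ cfCyl (t + 1) z ∧ gaussMap^[t + 1] (cfMobius z t s) = s := by
  induction t generalizing s with
  | zero =>
    obtain ⟨hfloor, hgauss⟩ :=
      floor_and_gaussMap_one_div_intCast_add (ha 1) (Ioo_subset_Ico_self hs)
    have hmem := one_div_intCast_add_mem_Ioo (ha 1) hs.1
    rw [cfMobius_zero]
    refine ⟨⟨Ioo_subset_Ico_self hmem, fun i h₁ h₂ ↦ ?_⟩, hgauss⟩
    obtain rfl : i = 1 := by omega
    simpa using hfloor
  | succ t ih =>
    have ha₂ := ha (t + 2)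
    obtain ⟨hfloor, hgauss⟩ :=
      floor_and_gaussMap_one_div_intCast_add ha₂ (Ioo_subset_Ico_self hs)
    have hpos : (0 : ℝ) < cfA (t + 2) z + s := by
      have : (1 : ℝ) ≤ cfA (t + 2) z := by exact_mod_cast ha₂
      linarith [hs.1]
    obtain ⟨hmem, hiter⟩ := ih (one_div_intCast_add_mem_Ioo ha₂ hs.1)
    rw [cfMobius_succ z t hpos.ne']
    refine ⟨⟨hmem.1, fun i h₁ h₂ ↦ ?_⟩, by rw [iterate_succ_apply', hiter, hgauss]⟩
    rcases h₂.lt_or_eq with h₂ | rfl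
    · exact hmem.2 i h₁ (by omega)
    · rw [cfA_succ, hiter, hfloor]

lemma uIoo_cfMobius_subset_cfCyl (t : ℕ) :
    uIoo (cfMobius z t 0) (cfMobius z t 1) ⊆ cfCyl (t + 1) z := by
  have hcont : ContinuousOn (cfMobius z t) (Icc 0 1) := by
    refine ContinuousOn.div (by fun_prop) (by fun_prop) fun s hs ↦ ?_
    exact (cfQ_add_mul_pos ha hs.1 t).ne'
  rw [uIoo_eq_union]
  rintro w (hw | hw)
  · obtain ⟨s, hs, rfl⟩ := intermediate_value_Ioo zero_le_one hcont hw
    exact (cfMobius_mem_cfCyl ha t hs).1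
  · obtain ⟨s, hs, rfl⟩ := intermediate_value_Ioo' zero_le_one hcont hw
    exact (cfMobius_mem_cfCyl ha t hs).1

lemma abs_sub_lt_of_mem_cfCyl (t : ℕ) {w w' : ℝ} (hw : w ∈ cfCyl (t + 1) z)
    (hw' : w' ∈ cfCyl (t + 1) z) : |w - w'| < 1 / (cfQ z (t + 1) : ℝ) ^ 2 := by
  set s := gaussMap^[t + 1] w
  set s' := gaussMap^[t + 1] w'
  have hs : s ∈ Ico 0 1 := by simp only [s, iterate_succ_apply']; exact gaussMap_mem_Ico _
  have hs' : s' ∈ Ico 0 1 := by simp only [s', iterate_succ_apply']; exact gaussMap_mem_Ico _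
  have hq₁ : (1 : ℝ) ≤ cfQ z (t + 1) := by exact_mod_cast one_le_cfQ ha (t + 1)
  have hq₀ : (0 : ℝ) ≤ cfQ z t := by exact_mod_cast zero_le_one.trans (one_le_cfQ ha t)
  have hD := mul_pos (cfQ_add_mul_pos ha hs.1 t) (cfQ_add_mul_pos ha hs'.1 t)
  rw [eq_cfMobius_of_mem_cfCyl ha t hw, eq_cfMobius_of_mem_cfCyl ha t hw',
    cfMobius_sub_cfMobius ha t hs.1 hs'.1, abs_div, abs_mul, abs_pow, abs_neg, abs_one, one_pow,
    one_mul, abs_of_pos hD, div_lt_div_iff₀ hD (by positivity), one_mul]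
  have hd : |s' - s| < 1 := by
    rw [abs_sub_lt_iff]; constructor <;> linarith [hs.1, hs.2, hs'.1, hs'.2]
  calc |s' - s| * (cfQ z (t + 1) : ℝ) ^ 2 < 1 * (cfQ z (t + 1) : ℝ) ^ 2 := by gcongr
    _ ≤ _ := by rw [one_mul, sq]; gcongr <;> nlinarith [hs.1, hs'.1]

lemma eq_cfMobius_iterate_gaussMap (hz : z ∈ Ico 0 1) (t : ℕ) :
    z = cfMobius z t (gaussMap^[t + 1] z) :=
  eq_cfMobius_of_mem_cfCyl ha t ⟨hz, fun _ _ _ ↦ rfl⟩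

lemma abs_sub_cfMobius (hz : z ∈ Ico 0 1) (t : ℕ) {s : ℝ} (hs : 0 ≤ s) :
    |z - cfMobius z t s| = |s - gaussMap^[t + 1] z| /
      ((cfQ z (t + 1) + cfQ z t * gaussMap^[t + 1] z) * (cfQ z (t + 1) + cfQ z t * s)) := by
  have hS : 0 ≤ gaussMap^[t + 1] z := by
    rw [iterate_succ_apply']; exact (gaussMap_mem_Ico _).1
  rw [congrArg (· - cfMobius z t s) (eq_cfMobius_iterate_gaussMap ha hz t),
    cfMobius_sub_cfMobius ha t hS hs, abs_div, abs_mul, abs_pow, abs_neg, abs_one, one_pow,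
    one_mul, abs_of_pos (mul_pos (cfQ_add_mul_pos ha hS t) (cfQ_add_mul_pos ha hs t))]

end Continuants

lemma min_abs_sub_le_abs_sub_of_mem_uIoo {α : Type*} [AddCommGroup α] [LinearOrder α]
    [IsOrderedAddMonoid α] {a b x y : α} (hx : x ∈ uIoo a b) (hy : y ∉ uIoo a b) :
    min |x - a| |x - b| ≤ |y - x| := by
  wlog hab : a ≤ b generalizing a b
  · rw [min_comm]
    exact this (uIoo_comm a b ▸ hx) (uIoo_comm a b ▸ hy) (le_of_not_ge hab)
  rw [uIoo_of_le hab] at hx hy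
  rw [mem_Ioo, not_and_or, not_lt, not_lt] at hy
  rcases hy with hy | hy
  · refine min_le_of_left_le ?_
    rw [abs_of_pos (sub_pos.2 hx.1), abs_sub_comm, abs_of_pos (sub_pos.2 (hy.trans_lt hx.1))]
    exact sub_le_sub_left hy x
  · refine min_le_of_right_le ?_
    rw [abs_of_neg (sub_neg.2 hx.2), abs_of_pos (sub_pos.2 (hx.2.trans_le hy)), neg_sub]
    exact sub_le_sub_right hy x

section Irrational

variable {x : ℝ} (hx : x ∈ Ioo 0 1) (hirr : Irrational x)
include hx hirr

lemma mem_uIoo_cfMobius (t : ℕ) : x ∈ uIoo (cfMobius x t 0) (cfMobius x t 1) := by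
  have ha := one_le_cfA hx hirr
  obtain ⟨hS₀, hS₁⟩ := iterate_gaussMap_mem_Ioo hx hirr (t + 1)
  have h₀ := cfMobius_sub_cfMobius ha t hS₀.le le_rfl
  have h₁ := cfMobius_sub_cfMobius ha t hS₀.le zero_le_one
  rw [← eq_cfMobius_iterate_gaussMap ha (Ioo_subset_Ico_self hx) t] at h₀ h₁
  have hD₀ := mul_pos (cfQ_add_mul_pos ha hS₀.le t) (cfQ_add_mul_pos ha le_rfl t)
  have hD₁ := mul_pos (cfQ_add_mul_pos ha hS₀.le t) (cfQ_add_mul_pos ha zero_le_one t)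
  rcases neg_one_pow_eq_or ℝ t with h | h <;> rw [h] at h₀ h₁
  · have : x - cfMobius x t 0 < 0 := by rw [h₀]; exact div_neg_of_neg_of_pos (by linarith) hD₀
    have : 0 < x - cfMobius x t 1 := by rw [h₁]; exact div_pos (by linarith) hD₁
    exact mem_uIoo_of_gt (by linarith) (by linarith)
  · have : 0 < x - cfMobius x t 0 := by rw [h₀]; exact div_pos (by linarith) hD₀
    have : x - cfMobius x t 1 < 0 := by rw [h₁]; exact div_neg_of_neg_of_pos (by linarith) hD₁
    exact mem_uIoo_of_lt (by linarith) (by linarith)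

lemma lt_abs_sub_cfMobius_zero (t : ℕ) :
    1 / (2 * (cfQ x (t + 3) : ℝ) ^ 2) < |x - cfMobius x t 0| := by
  have ha := one_le_cfA hx hirr
  obtain ⟨hS₀, -⟩ := iterate_gaussMap_mem_Ioo hx hirr (t + 1)
  obtain ⟨hS'₀, hS'₁⟩ := iterate_gaussMap_mem_Ioo hx hirr (t + 2)
  have hq₁ : (1 : ℝ) ≤ cfQ x (t + 1) := by exact_mod_cast one_le_cfQ ha (t + 1)
  have hq₂ : (1 : ℝ) ≤ cfQ x (t + 2) := by exact_mod_cast one_le_cfQ ha (t + 2)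
  have hq₃ : (cfQ x (t + 2) + cfQ x (t + 1) : ℝ) ≤ cfQ x (t + 3) := by
    exact_mod_cast cfQ_add_le_cfQ ha (t + 1)
  -- the distance is `1 / (q_{t+1} (q_{t+2} + q_{t+1} T^{t+2} x))`
  have hE : (cfQ x (t + 2) + cfQ x (t + 1) * gaussMap^[t + 2] x : ℝ) < cfQ x (t + 3) := by
    nlinarith
  have hE₀ : (0 : ℝ) < cfQ x (t + 2) + cfQ x (t + 1) * gaussMap^[t + 2] x := by positivity
  rw [abs_sub_cfMobius ha (Ioo_subset_Ico_self hx) t le_rfl, cfQ_add_mul_iterate_gaussMap hS₀.ne',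
    zero_sub, abs_neg, abs_of_pos hS₀, mul_zero, add_zero, mul_assoc,
    div_mul_cancel_left₀ hS₀.ne', one_div,
    inv_lt_inv₀ (mul_pos two_pos (pow_pos (by linarith) 2)) (mul_pos hE₀ (by linarith))]
  nlinarith [mul_lt_mul_of_pos_right hE (by linarith : (0 : ℝ) < cfQ x (t + 1))]

lemma lt_abs_sub_cfMobius_one (t : ℕ) :
    1 / (2 * (cfQ x (t + 3) : ℝ) ^ 2) < |x - cfMobius x t 1| := by
  have ha := one_le_cfA hx hirr
  obtain ⟨hS₀, hS₁⟩ := iterate_gaussMap_mem_Ioo hx hirr (t + 1)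
  obtain ⟨hS'₀, -⟩ := iterate_gaussMap_mem_Ioo hx hirr (t + 2)
  obtain ⟨hS''₀, hS''₁⟩ := iterate_gaussMap_mem_Ioo hx hirr (t + 3)
  have hq₀ : (1 : ℝ) ≤ cfQ x t := by exact_mod_cast one_le_cfQ ha t
  have hq₁ : (1 : ℝ) ≤ cfQ x (t + 1) := by exact_mod_cast one_le_cfQ ha (t + 1)
  have hq₂ : (cfQ x (t + 1) + cfQ x t : ℝ) ≤ cfQ x (t + 2) := by
    exact_mod_cast cfQ_add_le_cfQ ha t
  have hq₃ : (cfQ x (t + 2) + cfQ x (t + 1) : ℝ) ≤ cfQ x (t + 3) := by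
    exact_mod_cast cfQ_add_le_cfQ ha (t + 1)
  -- with `S = T^{t+1} x` and `S' = T S`, the distance is
  -- `(1 - S) / (S S' (q_{t+3} + q_{t+2} T S') (q_{t+1} + q_t))`, and `1 - S ≥ S S'`
  have hSS' : gaussMap^[t + 1] x * gaussMap^[t + 2] x ≤ 1 - gaussMap^[t + 1] x := by
    have h := iterate_gaussMap_mul_cfA_add hS₀.ne'
    have : (1 : ℝ) ≤ cfA (t + 2) x := by exact_mod_cast ha (t + 2)
    nlinarith
  have hF : (cfQ x (t + 3) + cfQ x (t + 2) * gaussMap^[t + 3] x : ℝ) < 2 * cfQ x (t + 3) := by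
    nlinarith
  have hF₀ : (0 : ℝ) < cfQ x (t + 3) + cfQ x (t + 2) * gaussMap^[t + 3] x := by nlinarith
  have hq₂₃ : (cfQ x (t + 1) + cfQ x t : ℝ) ≤ cfQ x (t + 3) := hq₂.trans (by linarith)
  have hFQ : (cfQ x (t + 3) + cfQ x (t + 2) * gaussMap^[t + 3] x : ℝ) *
      (cfQ x (t + 1) + cfQ x t) < 2 * cfQ x (t + 3) ^ 2 := by
    nlinarith [mul_le_mul_of_nonneg_left hq₂₃ hF₀.le]
  rw [abs_sub_cfMobius ha (Ioo_subset_Ico_self hx) t zero_le_one,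
    cfQ_add_mul_iterate_gaussMap hS₀.ne', cfQ_add_mul_iterate_gaussMap hS'₀.ne',
    abs_of_pos (by linarith), mul_one,
    div_lt_div_iff₀ (mul_pos two_pos (pow_pos (by linarith) 2))
      (mul_pos (mul_pos hS₀ (mul_pos hS'₀ hF₀)) (by linarith)), one_mul]
  calc _ = gaussMap^[t + 1] x * gaussMap^[t + 2] x *
        ((cfQ x (t + 3) + cfQ x (t + 2) * gaussMap^[t + 3] x) * (cfQ x (t + 1) + cfQ x t)) := by
        ring
    _ < gaussMap^[t + 1] x * gaussMap^[t + 2] x * (2 * cfQ x (t + 3) ^ 2) := by gcongr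
    _ ≤ _ := by gcongr

lemma lt_abs_sub_of_notMem_cfCyl (t : ℕ) {y : ℝ} (hy : y ∉ cfCyl (t + 1) x) :
    1 / (2 * (cfQ x (t + 3) : ℝ) ^ 2) < |y - x| :=
  calc _ < min |x - cfMobius x t 0| |x - cfMobius x t 1| :=
        lt_min (lt_abs_sub_cfMobius_zero hx hirr t) (lt_abs_sub_cfMobius_one hx hirr t)
    _ ≤ |y - x| := min_abs_sub_le_abs_sub_of_mem_uIoo (mem_uIoo_cfMobius hx hirr t)
        fun h ↦ hy (uIoo_cfMobius_subset_cfCyl (one_le_cfA hx hirr) t h)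

end Irrational

lemma betaT_mem_Ico (β x : ℝ) : betaT β x ∈ Ico 0 1 :=
  ⟨Int.fract_nonneg (β * x), Int.fract_lt_one (β * x)⟩

lemma iterate_betaT_mem_Ico {β x : ℝ} (hx : x ∈ Ico 0 1) (i : ℕ) :
    (betaT β)^[i] x ∈ Ico 0 1 := by
  cases i with
  | zero => exact hx
  | succ i => rw [iterate_succ_apply']; exact betaT_mem_Ico β _

lemma iterate_betaT_sub_iterate_betaT {β x y : ℝ} {n : ℕ} (hy : y ∈ betaCyl β n x) {i : ℕ}
    (hi : i ≤ n) : (betaT β)^[i] y - (betaT β)^[i] x = β ^ i * (y - x) := by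
  induction i with
  | zero => simp
  | succ i ih =>
    have hdigit : (⌊β * (betaT β)^[i] y⌋ : ℝ) = ⌊β * (betaT β)^[i] x⌋ := by
      exact_mod_cast hy.2 (i + 1) (by omega) hi
    rw [iterate_succ_apply', iterate_succ_apply', betaT, betaT]
    linear_combination β * ih (by omega) - hdigit

lemma abs_pow_mul_sub_lt_one {β x y : ℝ} {n : ℕ} (hx : x ∈ Ico 0 1)
    (hy : y ∈ betaCyl β n x) : |β ^ n * (y - x)| < 1 := by
  have hTy := iterate_betaT_mem_Ico (β := β) hy.1 n
  have hTx := iterate_betaT_mem_Ico (β := β) hx n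
  rw [← iterate_betaT_sub_iterate_betaT hy le_rfl, abs_sub_lt_iff]
  constructor <;> linarith [hTy.1, hTy.2, hTx.1, hTx.2]

lemma eventually_mem_betaCyl {β x : ℝ} (hβ : 0 ≤ β) (hx : x ∈ Ico 0 1) (n : ℕ) :
    ∀ᶠ y in 𝓝[≥] x, y ∈ betaCyl β n x := by
  induction n with
  | zero =>
    filter_upwards [Ico_mem_nhdsGE hx.2] with y hy
    exact ⟨⟨hx.1.trans hy.1, hy.2⟩, fun i h₁ h₂ ↦ by omega⟩
  | succ n ih =>
    set c := β * (betaT β)^[n] x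
    have hlin : Tendsto (fun y ↦ c + β ^ (n + 1) * (y - x)) (𝓝[≥] x) (𝓝[≥] c) := by
      refine tendsto_nhdsWithin_iff.2 ⟨?_, ?_⟩
      · have : Continuous (fun y ↦ c + β ^ (n + 1) * (y - x)) := by fun_prop
        simpa using (this.tendsto x).mono_left nhdsWithin_le_nhds
      · filter_upwards [self_mem_nhdsWithin] with y (hy : x ≤ y)
        simpa using mul_nonneg (pow_nonneg hβ _) (sub_nonneg.2 hy)
    filter_upwards [ih, tendsto_pure.1 ((tendsto_floor_right_pure_floor c).comp hlin)]
      with y hy hfloor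
    refine ⟨hy.1, fun i h₁ h₂ ↦ ?_⟩
    rcases h₂.lt_or_eq with h₂ | rfl
    · exact hy.2 i h₁ (by omega)
    · have hT := iterate_betaT_sub_iterate_betaT hy le_rfl
      change ⌊β * (betaT β)^[n] y⌋ = ⌊c⌋
      rw [← hfloor]
      congr 1
      linear_combination β * hT

lemma bddAbove_setOf_betaCyl_subset_cfCyl {β x : ℝ} (hβ : 0 ≤ β) (hx : x ∈ Ioo 0 1)
    (hirr : Irrational x) (n : ℕ) : BddAbove {m | betaCyl β n x ⊆ cfCyl m x} := by
  have ha := one_le_cfA hx hirr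
  obtain ⟨y, hyβ, hxy⟩ : ∃ y ∈ betaCyl β n x, x < y :=
    (((eventually_mem_betaCyl hβ (Ioo_subset_Ico_self hx) n).filter_mono
      (nhdsWithin_mono _ Ioi_subset_Ici_self)).and self_mem_nhdsWithin).exists
  refine ⟨⌈1 / (y - x)⌉₊, fun m hm ↦ ?_⟩
  obtain _ | t := m
  · exact Nat.zero_le _
  have hlt :=
    abs_sub_lt_of_mem_cfCyl ha t (hm hyβ) (hm ⟨Ioo_subset_Ico_self hx, fun _ _ _ ↦ rfl⟩)
  have hq : (t + 1 : ℝ) ≤ cfQ x (t + 1) := by exact_mod_cast natCast_le_cfQ ha (t + 1)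
  rw [abs_of_pos (sub_pos.2 hxy)] at hlt
  have hyx : y - x < 1 / (t + 1) :=
    hlt.trans_le (one_div_le_one_div_of_le (by positivity) (by nlinarith))
  have : ((t + 1 : ℕ) : ℝ) < 1 / (y - x) := by
    push_cast
    exact (lt_one_div (by positivity) (sub_pos.2 hxy)).2 hyx
  exact_mod_cast this.le.trans (Nat.le_ceil _)

lemma not_betaCyl_subset_cfCyl_kCF_add_one {β x : ℝ} (hβ : 0 ≤ β) (hx : x ∈ Ioo 0 1)
    (hirr : Irrational x) (n : ℕ) : ¬ betaCyl β n x ⊆ cfCyl (kCF β n x + 1) x := fun h ↦ by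
  have : kCF β n x + 1 ≤ kCF β n x :=
    le_csSup (bddAbove_setOf_betaCyl_subset_cfCyl hβ hx hirr n) h
  omega

theorem log_q_kn_plus_three_lower_general (β : ℝ) (hβ : 1 < β)
    (x : ℝ) (hx : x ∈ Set.Ico (0:ℝ) 1) (hirr : Irrational x) (n : ℕ) :
    Real.log (cfQ x (kCF β n x + 3)) - (Real.log β / 2) * n ≥ -(Real.log 6 / 2) := by
  have hx' : x ∈ Ioo 0 1 := ⟨hx.1.lt_of_ne' hirr.ne_zero, hx.2⟩
  obtain ⟨y, hyβ, hycf⟩ :=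
    not_subset.1 (not_betaCyl_subset_cfCyl_kCF_add_one (zero_le_one.trans hβ.le) hx' hirr n)
  have hq : (0 : ℝ) < cfQ x (kCF β n x + 3) := by
    have : (1 : ℝ) ≤ cfQ x (kCF β n x + 3) := by
      exact_mod_cast one_le_cfQ (one_le_cfA hx' hirr) _
    linarith
  have hβn : β ^ n < 6 * (cfQ x (kCF β n x + 3) : ℝ) ^ 2 := by
    have hgap := lt_abs_sub_of_notMem_cfCyl hx' hirr _ hycf
    have hcyl := abs_pow_mul_sub_lt_one hx hyβ
    rw [abs_mul, abs_of_pos (by positivity)] at hcyl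
    rw [div_lt_iff₀ (by positivity)] at hgap
    nlinarith
  have hlog := Real.log_lt_log (by positivity) hβn
  rw [Real.log_pow, Real.log_mul (by norm_num) (by positivity), Real.log_pow] at hlog
  push_cast at hlog
  linarith

theorem log_q_kn_plus_three_lower (β : ℝ) (hβ : 1 < β)
    (x : ℝ) (hx : x ∈ Set.Ico (0:ℝ) 1) (hirr : Irrational x) (n : ℕ) (hn : 1 ≤ n) :
    Real.log (cfQ x (kCF β n x + 3)) - (Real.log β / 2) * n ≥ -(Real.log 6 / 2) :=
  log_q_kn_plus_three_lower_general β hβ x hx hirr n
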